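/- arXiv:2602.23796 — 7 statements merged into one kernel-verified Lean document; each statement's English description precedes it below -/
import Mathlib

section
/- Let X and Y be Banach spaces and let u ∈ INA_π(X⊗̂_πY) be witnessed by a finite positive Borel measure μ on B_X×B_Y. If μ' is another finite positive Borel measure on B_X×B_Y with μ' ≪ μ (absolutely continuous), then the Bochner integral u' = ∫_{B_X×B_Y} x⊗y dμ'(x,y) is well-defined and u' ∈ INA_π(X⊗̂_πY), witnessed by μ'. -/
open MeasureTheory Metric Set Filter TopologicalSpace

noncomputable section

variable {𝕜 : Type*} [RCLike 𝕜]
variable {X : Type*} [NormedAddCommGroup X] [NormedSpace 𝕜 X]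
variable {Y : Type*} [NormedAddCommGroup Y] [NormedSpace 𝕜 Y]
variable {T : Type*} [NormedAddCommGroup T] [NormedSpace 𝕜 T]
variable [NormedSpace ℝ T] [IsScalarTower ℝ 𝕜 T]

/-- `T`, together with the continuous bilinear map `tmul`, is a realization of the
projective tensor product `X ⊗̂_π Y`: it is complete, the span of elementary tensors
`x ⊗ y = tmul x y` is dense, and on that span the norm is the projective norm. -/
structure IsProjTensor (tmul : X →L[𝕜] Y →L[𝕜] T) : Prop where
  complete : CompleteSpace T
  dense_span :
    Dense ((Submodule.span 𝕜 (Set.range fun p : X × Y => tmul p.1 p.2) : Submodule 𝕜 T) : Set T)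
  norm_eq : ∀ z : T,
    z ∈ Submodule.span 𝕜 (Set.range fun p : X × Y => tmul p.1 p.2) →
    ‖z‖ = sInf { c : ℝ | ∃ (m : ℕ) (x : Fin m → X) (y : Fin m → Y),
      z = ∑ i, tmul (x i) (y i) ∧ c = ∑ i, ‖x i‖ * ‖y i‖ }

/-- `u` attains its projective norm (`u ∈ NA_π(X ⊗̂_π Y)`): it admits a representation
`u = ∑ λ_n x_n ⊗ y_n` with `x_n ∈ B_X`, `y_n ∈ B_Y`, `λ_n ≥ 0` and `∑ λ_n = ‖u‖_π`. -/
def NApi (tmul : X →L[𝕜] Y →L[𝕜] T) (u : T) : Prop :=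
  ∃ (x : ℕ → X) (y : ℕ → Y) (l : ℕ → ℝ),
    (∀ n, ‖x n‖ ≤ 1) ∧ (∀ n, ‖y n‖ ≤ 1) ∧ (∀ n, 0 ≤ l n) ∧
    HasSum (fun n => (l n : 𝕜) • tmul (x n) (y n)) u ∧ HasSum l ‖u‖

/-- `u` is finitely norm-attaining (`u ∈ FNA_π(X ⊗̂_π Y)`): it admits a finite optimal
representation `u = ∑_{k<m} x_k ⊗ y_k` with `∑_{k<m} ‖x_k‖‖y_k‖ = ‖u‖_π`. -/
def FNApi (tmul : X →L[𝕜] Y →L[𝕜] T) (u : T) : Prop :=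
  ∃ (m : ℕ) (x : Fin m → X) (y : Fin m → Y),
    u = ∑ i, tmul (x i) (y i) ∧ ∑ i, ‖x i‖ * ‖y i‖ = ‖u‖

/-- `u` is an integral projective norm-attaining tensor witnessed by `μ`: `μ` is a finite
positive Borel measure concentrated on `B_X × B_Y`, the map `(x, y) ↦ x ⊗ y` is
`μ`-Bochner integrable, `u = ∫ x ⊗ y ∂μ` and `‖μ‖ = ‖u‖_π`. -/
def INApiWitness [MeasurableSpace X] [MeasurableSpace Y]
    (tmul : X →L[𝕜] Y →L[𝕜] T) (u : T) (μ : Measure (X × Y)) : Prop :=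
  IsFiniteMeasure μ ∧
  μ ((closedBall (0 : X) 1 ×ˢ closedBall (0 : Y) 1)ᶜ) = 0 ∧
  Integrable (fun p : X × Y => tmul p.1 p.2) μ ∧
  u = ∫ p, tmul p.1 p.2 ∂μ ∧
  (μ Set.univ).toReal = ‖u‖

/-- `u ∈ INA_π(X ⊗̂_π Y)`: `u` is an integral projective norm-attaining tensor. -/
def INApi [MeasurableSpace X] [MeasurableSpace Y]
    (tmul : X →L[𝕜] Y →L[𝕜] T) (u : T) : Prop :=
  ∃ μ : Measure (X × Y), INApiWitness tmul u μ

/-! Take a real norming functional `g` of `u` with `‖g‖ ≤ 1`. On `B_X × B_Y` we have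
`‖x ⊗ y‖ ≤ 1`, so `g (x ⊗ y) ≤ 1` μ-a.e., while its μ-integral is `g u = ‖u‖ = μ(B_X × B_Y)`.
Hence `g (x ⊗ y) = 1` μ-a.e., and therefore μ'-a.e. For `u' = ∫ x ⊗ y dμ'` this gives
`μ'(B_X × B_Y) = g u' ≤ ‖u'‖ ≤ ∫ ‖x ⊗ y‖ dμ' ≤ μ'(B_X × B_Y)`. -/

section AbsolutelyContinuous

variable {α E : Type*} [MeasurableSpace α] [NormedAddCommGroup E] {μ μ' : Measure α}

theorem integrable_of_ae_norm_le_of_absolutelyContinuous [IsFiniteMeasure μ'] {f : α → E}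
    (hf : AEStronglyMeasurable f μ) {C : ℝ} (hC : ∀ᵐ x ∂μ, ‖f x‖ ≤ C) (hac : μ' ≪ μ) :
    Integrable f μ' :=
  .of_bound (hf.mono_ac hac) C (hac.ae_le hC)

theorem ae_eq_one_of_integral_eq_measureReal [IsFiniteMeasure μ] {g : α → ℝ}
    (hg : Integrable g μ) (hg_le : ∀ᵐ x ∂μ, g x ≤ 1) (h : ∫ x, g x ∂μ = μ.real univ) :
    ∀ᵐ x ∂μ, g x = 1 :=
  (integral_eq_iff_of_ae_le hg (integrable_const 1) hg_le).mp (by simpa using h)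

theorem norm_integral_eq_measureReal_of_absolutelyContinuous [NormedSpace ℝ E] [CompleteSpace E]
    [IsFiniteMeasure μ] [IsFiniteMeasure μ'] {f : α → E} (hf : Integrable f μ)
    (hf_le : ∀ᵐ x ∂μ, ‖f x‖ ≤ 1) (hnorm : ‖∫ x, f x ∂μ‖ = μ.real univ) (hac : μ' ≪ μ) :
    ‖∫ x, f x ∂μ'‖ = μ'.real univ := by
  obtain ⟨g, hg, hg_int⟩ := exists_dual_vector'' ℝ (∫ x, f x ∂μ)
  have hg_le (v : E) : g v ≤ ‖v‖ :=
    (Real.le_norm_self _).trans ((g.le_opNorm v).trans (mul_le_of_le_one_left (norm_nonneg v) hg))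
  have hgf_le : ∀ᵐ x ∂μ, g (f x) ≤ 1 := hf_le.mono fun x hx => (hg_le (f x)).trans hx
  have hgf_eq : ∀ᵐ x ∂μ, g (f x) = 1 :=
    ae_eq_one_of_integral_eq_measureReal (g.integrable_comp hf) hgf_le
      (by rw [g.integral_comp_comm hf, hg_int, hnorm]; rfl)
  have hf' := integrable_of_ae_norm_le_of_absolutelyContinuous hf.aestronglyMeasurable hf_le hac
  refine le_antisymm ?_ ?_
  · simpa using norm_integral_le_of_norm_le_const (hac.ae_le hf_le)
  · calc μ'.real univ = ∫ x, g (f x) ∂μ' := by simp [integral_congr_ae (hac.ae_le hgf_eq)]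
      _ = g (∫ x, f x ∂μ') := g.integral_comp_comm hf'
      _ ≤ ‖∫ x, f x ∂μ'‖ := hg_le _

end AbsolutelyContinuous

section ProjTensor

variable {E F G : Type*} [NormedAddCommGroup E] [NormedSpace 𝕜 E] [NormedAddCommGroup F]
  [NormedSpace 𝕜 F] [NormedAddCommGroup G] [NormedSpace 𝕜 G] {tmul : E →L[𝕜] F →L[𝕜] G}

theorem IsProjTensor.norm_tmul_le (hT : IsProjTensor tmul) (x : E) (y : F) :
    ‖tmul x y‖ ≤ ‖x‖ * ‖y‖ := by
  rw [hT.norm_eq _ (Submodule.subset_span ⟨(x, y), rfl⟩)]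
  refine csInf_le ⟨0, ?_⟩ ⟨1, ![x], ![y], by simp, by simp⟩
  rintro c ⟨m, xs, ys, -, rfl⟩
  positivity

theorem IsProjTensor.ae_norm_tmul_le_one [MeasurableSpace E] [MeasurableSpace F]
    (hT : IsProjTensor tmul) {μ : Measure (E × F)}
    (hμ : μ ((closedBall (0 : E) 1 ×ˢ closedBall (0 : F) 1)ᶜ) = 0) :
    ∀ᵐ p ∂μ, ‖tmul p.1 p.2‖ ≤ 1 := by
  filter_upwards [ae_iff.mpr hμ] with p ⟨hx, hy⟩
  exact (hT.norm_tmul_le p.1 p.2).trans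
    (mul_le_one₀ (mem_closedBall_zero_iff.mp hx) (norm_nonneg _) (mem_closedBall_zero_iff.mp hy))

end ProjTensor

theorem stmt_1_general
    [MeasurableSpace X] [MeasurableSpace Y]
    (tmul : X →L[𝕜] Y →L[𝕜] T) (hT : IsProjTensor tmul)
    (u : T) (μ : Measure (X × Y)) (hμ : INApiWitness tmul u μ)
    (μ' : Measure (X × Y)) [IsFiniteMeasure μ'] (hac : μ' ≪ μ) :
    Integrable (fun p : X × Y => tmul p.1 p.2) μ' ∧
    INApiWitness tmul (∫ p, tmul p.1 p.2 ∂μ') μ' := by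
  have := hT.complete
  obtain ⟨_, hball, hint, rfl, hnorm⟩ := hμ
  have hbound := hT.ae_norm_tmul_le_one hball
  have hint' :=
    integrable_of_ae_norm_le_of_absolutelyContinuous hint.aestronglyMeasurable hbound hac
  refine ⟨hint', inferInstance, hac hball, hint', rfl, ?_⟩
  rw [← measureReal_def] at hnorm ⊢
  exact (norm_integral_eq_measureReal_of_absolutelyContinuous hint hbound hnorm.symm hac).symm

/-- Corollary 2.5: integral norm attainment passes to absolutely continuous measures. -/
theorem stmt_1 [CompleteSpace X] [CompleteSpace Y]
    [MeasurableSpace X] [BorelSpace X] [MeasurableSpace Y] [BorelSpace Y]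
    (tmul : X →L[𝕜] Y →L[𝕜] T) (hT : IsProjTensor tmul)
    (u : T) (μ : Measure (X × Y)) (hμ : INApiWitness tmul u μ)
    (μ' : Measure (X × Y)) [IsFiniteMeasure μ'] (hac : μ' ≪ μ) :
    Integrable (fun p : X × Y => tmul p.1 p.2) μ' ∧
    INApiWitness tmul (∫ p, tmul p.1 p.2 ∂μ') μ' :=
  stmt_1_general tmul hT u μ hμ μ' hac
end
end

section
/- Let X and Y be Banach spaces. If u ∈ NA_π(X⊗̂_πY) is witnessed by the series u = Σ_{n=1}^∞ a_n x_n⊗y_n with (x_n,y_n) ∈ B_X×B_Y, a_n ≥ 0 and Σ_{n=1}^∞ a_n = ‖u‖_π, then for any choice of coefficients a'_n ∈ [0, a_n], the tensor u' = Σ_{n=1}^∞ a'_n x_n⊗y_n also belongs to NA_π(X⊗̂_πY). -/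
/-!
Write `v_n = x_n ⊗ y_n`, so `‖v_n‖ ≤ 1`. The series `∑ a'_n v_n` and `∑ (a_n - a'_n) v_n`
converge absolutely, with norms at most `∑ a'_n` and `∑ (a_n - a'_n)`. They add up to `u`,
whose norm is the full sum `∑ a_n`, so by the triangle inequality neither bound can be strict.
-/

open MeasureTheory Metric Set Filter TopologicalSpace

noncomputable section

variable {𝕜 : Type*} [RCLike 𝕜]
variable {X : Type*} [NormedAddCommGroup X] [NormedSpace 𝕜 X]
variable {Y : Type*} [NormedAddCommGroup Y] [NormedSpace 𝕜 Y]
variable {T : Type*} [NormedAddCommGroup T] [NormedSpace 𝕜 T]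
variable [NormedSpace ℝ T] [IsScalarTower ℝ 𝕜 T]

section SeriesOfUnitVectors

variable {E ι : Type*} [NormedAddCommGroup E] [NormedSpace 𝕜 E]

lemma norm_ofReal_smul_le {c : ℝ} (hc : 0 ≤ c) {v : E} (hv : ‖v‖ ≤ 1) : ‖(c : 𝕜) • v‖ ≤ c := by
  rw [norm_smul, RCLike.norm_ofReal, abs_of_nonneg hc]
  exact mul_le_of_le_one_right hc hv

lemma norm_eq_of_eq_add_of_le {u v w : E} {s t : ℝ} (huvw : u = v + w) (hv : ‖v‖ ≤ s)
    (hw : ‖w‖ ≤ t) (hu : s + t ≤ ‖u‖) : ‖v‖ = s := by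
  have := huvw ▸ norm_add_le v w
  linarith

theorem exists_hasSum_ofReal_smul_of_le [CompleteSpace E] {v : ι → E} (hv : ∀ n, ‖v n‖ ≤ 1)
    {a a' : ι → ℝ} (ha' : ∀ n, a' n ∈ Icc 0 (a n)) {u : E}
    (hu : HasSum (fun n => (a n : 𝕜) • v n) u) (hopt : HasSum a ‖u‖) :
    ∃ u', HasSum (fun n => (a' n : 𝕜) • v n) u' ∧ HasSum a' ‖u'‖ := by
  have ha'_sum : Summable a' :=
    hopt.summable.of_nonneg_of_le (fun n => (ha' n).1) (fun n => (ha' n).2)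
  have hbound : ∀ c : ι → ℝ, (∀ n, 0 ≤ c n) → ∀ n, ‖(c n : 𝕜) • v n‖ ≤ c n :=
    fun c hc n => norm_ofReal_smul_le (hc n) (hv n)
  obtain ⟨u', hu'⟩ : Summable fun n => (a' n : 𝕜) • v n :=
    .of_norm_bounded ha'_sum (hbound a' fun n => (ha' n).1)
  have hrest : HasSum (fun n => ((a n - a' n : ℝ) : 𝕜) • v n) (u - u') := by
    simpa only [RCLike.ofReal_sub, sub_smul] using hu.sub hu'
  have hrest_sum : HasSum (fun n => a n - a' n) (‖u‖ - ∑' n, a' n) :=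
    hopt.sub ha'_sum.hasSum
  have hnorm : ‖u'‖ = ∑' n, a' n :=
    norm_eq_of_eq_add_of_le (add_sub_cancel u' u).symm
      (hu'.norm_le_of_bounded ha'_sum.hasSum (hbound a' fun n => (ha' n).1))
      (hrest.norm_le_of_bounded hrest_sum (hbound _ fun n => sub_nonneg.2 (ha' n).2))
      (by rw [add_sub_cancel])
  exact ⟨u', hu', hnorm ▸ ha'_sum.hasSum⟩

end SeriesOfUnitVectors

section

variable {Z : Type*} [NormedAddCommGroup Z] [NormedSpace 𝕜 Z]

lemma IsProjTensor.norm_tmul_le_s2 {tmul : X →L[𝕜] Y →L[𝕜] Z} (hT : IsProjTensor tmul)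
    (p : X) (q : Y) : ‖tmul p q‖ ≤ ‖p‖ * ‖q‖ := by
  rw [hT.norm_eq _ (Submodule.subset_span ⟨(p, q), rfl⟩)]
  refine csInf_le ⟨0, ?_⟩ ⟨1, ![p], ![q], by simp, by simp⟩
  rintro c ⟨m, xs, ys, -, rfl⟩
  positivity

end

theorem stmt_2_general
    (tmul : X →L[𝕜] Y →L[𝕜] T) (hT : IsProjTensor tmul)
    (u : T) (x : ℕ → X) (y : ℕ → Y) (a : ℕ → ℝ)
    (hx : ∀ n, ‖x n‖ ≤ 1) (hy : ∀ n, ‖y n‖ ≤ 1)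
    (hrep : HasSum (fun n => (a n : 𝕜) • tmul (x n) (y n)) u)
    (hopt : HasSum a ‖u‖)
    (a' : ℕ → ℝ) (ha' : ∀ n, a' n ∈ Set.Icc 0 (a n)) :
    ∃ u' : T, HasSum (fun n => (a' n : 𝕜) • tmul (x n) (y n)) u' ∧ NApi tmul u' := by
  have := hT.complete
  have hv : ∀ n, ‖tmul (x n) (y n)‖ ≤ 1 := fun n =>
    (hT.norm_tmul_le_s2 _ _).trans (mul_le_one₀ (hx n) (norm_nonneg _) (hy n))
  obtain ⟨u', hu', hnorm⟩ := exists_hasSum_ofReal_smul_of_le hv ha' hrep hopt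
  exact ⟨u', hu', x, y, a', hx, hy, fun n => (ha' n).1, hu', hnorm⟩

/-- Truncating the coefficients of an optimal series representation preserves
projective norm attainment. -/
theorem stmt_2 [CompleteSpace X] [CompleteSpace Y]
    (tmul : X →L[𝕜] Y →L[𝕜] T) (hT : IsProjTensor tmul)
    (u : T) (x : ℕ → X) (y : ℕ → Y) (a : ℕ → ℝ)
    (hx : ∀ n, ‖x n‖ ≤ 1) (hy : ∀ n, ‖y n‖ ≤ 1) (ha : ∀ n, 0 ≤ a n)
    (hrep : HasSum (fun n => (a n : 𝕜) • tmul (x n) (y n)) u)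
    (hopt : HasSum a ‖u‖)
    (a' : ℕ → ℝ) (ha' : ∀ n, a' n ∈ Set.Icc 0 (a n)) :
    ∃ u' : T, HasSum (fun n => (a' n : 𝕜) • tmul (x n) (y n)) u' ∧ NApi tmul u' :=
  stmt_2_general tmul hT u x y a hx hy hrep hopt a' ha'
end
end

section
/- Let X and Y be Banach spaces. If a bounded bilinear form B ∈ B(X×Y) = (X⊗̂_πY)* attains its norm as a functional at some element of INA_π(X⊗̂_πY), i.e. there exists u ∈ INA_π(X⊗̂_πY) with ‖u‖_π = 1 and |B(u)| = ‖B‖, then B is a norm-attaining bilinear form, i.e. B ∈ NA(X×Y). -/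
/-!
Since `‖u‖ = 1`, the witness `μ` of `u ∈ INA_π` is a probability measure, so
`‖B‖ = ‖B u‖ ≤ ∫ ‖B (x ⊗ y)‖ dμ ≤ ‖B‖` forces `‖B (x ⊗ y)‖ = ‖B‖` for `μ`-almost every
`(x, y) ∈ B_X × B_Y`. As `u ≠ 0`, some such `x ⊗ y` is nonzero, and normalizing `x` and `y`
can only increase `‖B (x ⊗ y)‖`.
-/

open MeasureTheory Metric Set Filter TopologicalSpace

noncomputable section

variable {𝕜 : Type*} [RCLike 𝕜]
variable {X : Type*} [NormedAddCommGroup X] [NormedSpace 𝕜 X]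
variable {Y : Type*} [NormedAddCommGroup Y] [NormedSpace 𝕜 Y]
variable {T : Type*} [NormedAddCommGroup T] [NormedSpace 𝕜 T]
variable [NormedSpace ℝ T] [IsScalarTower ℝ 𝕜 T]

theorem ae_norm_eq_of_le_norm_integral {α E : Type*} [MeasurableSpace α] {μ : Measure α}
    [IsProbabilityMeasure μ] [NormedAddCommGroup E] [NormedSpace ℝ E] {f : α → E} {C : ℝ}
    (hf : Integrable f μ) (hle : ∀ᵐ a ∂μ, ‖f a‖ ≤ C) (hC : C ≤ ‖∫ a, f a ∂μ‖) :
    ∀ᵐ a ∂μ, ‖f a‖ = C := by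
  have hgap_nonneg : 0 ≤ᵐ[μ] fun a => C - ‖f a‖ := hle.mono fun a ha => sub_nonneg.2 ha
  have hgap_int : Integrable (fun a => C - ‖f a‖) μ := (integrable_const C).sub hf.norm
  have hgap_zero : ∫ a, (C - ‖f a‖) ∂μ = 0 := by
    refine le_antisymm ?_ (integral_nonneg_of_ae hgap_nonneg)
    rw [integral_sub (integrable_const C) hf.norm, integral_const, probReal_univ, one_smul]
    linarith [norm_integral_le_integral_norm (μ := μ) f]
  filter_upwards [(integral_eq_zero_iff_of_nonneg_ae hgap_nonneg hgap_int).1 hgap_zero]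
    with a ha
  exact (sub_eq_zero.1 ha).symm

omit [IsScalarTower ℝ 𝕜 T] in
theorem INApiWitness.isProbabilityMeasure [MeasurableSpace X] [MeasurableSpace Y]
    {tmul : X →L[𝕜] Y →L[𝕜] T} {u : T} {μ : Measure (X × Y)} (h : INApiWitness tmul u μ)
    (hu : ‖u‖ = 1) : IsProbabilityMeasure μ :=
  ⟨(ENNReal.toReal_eq_one_iff _).1 (h.2.2.2.2.trans hu)⟩

namespace IsProjTensor

omit [NormedSpace ℝ T] [IsScalarTower ℝ 𝕜 T]

variable {tmul : X →L[𝕜] Y →L[𝕜] T}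

theorem norm_tmul_le_s3 (hT : IsProjTensor tmul) (x : X) (y : Y) :
    ‖tmul x y‖ ≤ ‖x‖ * ‖y‖ := by
  rw [hT.norm_eq _ (Submodule.subset_span ⟨(x, y), rfl⟩)]
  refine csInf_le ⟨0, ?_⟩ ⟨1, ![x], ![y], by simp, by simp⟩
  rintro c ⟨m, xs, ys, -, rfl⟩
  exact Finset.sum_nonneg fun i _ => mul_nonneg (norm_nonneg _) (norm_nonneg _)

theorem norm_apply_tmul_le (hT : IsProjTensor tmul) (B : T →L[𝕜] 𝕜) {x : X} {y : Y}
    (hx : ‖x‖ ≤ 1) (hy : ‖y‖ ≤ 1) : ‖B (tmul x y)‖ ≤ ‖B‖ :=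
  calc ‖B (tmul x y)‖ ≤ ‖B‖ * (‖x‖ * ‖y‖) :=
        (B.le_opNorm _).trans (mul_le_mul_of_nonneg_left (hT.norm_tmul_le_s3 x y) (norm_nonneg B))
    _ ≤ ‖B‖ * 1 := by gcongr; exact mul_le_one₀ hx (norm_nonneg y) hy
    _ = ‖B‖ := mul_one _

theorem exists_norm_eq_one_of_norm_apply_tmul_eq (hT : IsProjTensor tmul) (B : T →L[𝕜] 𝕜)
    {x : X} {y : Y} (hx : ‖x‖ ≤ 1) (hy : ‖y‖ ≤ 1) (hxy : tmul x y ≠ 0)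
    (hB : ‖B (tmul x y)‖ = ‖B‖) :
    ∃ (x' : X) (y' : Y), ‖x'‖ = 1 ∧ ‖y'‖ = 1 ∧ ‖B (tmul x' y')‖ = ‖B‖ := by
  have hx0 : x ≠ 0 := fun h => hxy (by simp [h])
  have hy0 : y ≠ 0 := fun h => hxy (by simp [h])
  refine ⟨(‖x‖⁻¹ : 𝕜) • x, (‖y‖⁻¹ : 𝕜) • y, norm_smul_inv_norm hx0, norm_smul_inv_norm hy0,
    le_antisymm (hT.norm_apply_tmul_le B (norm_smul_inv_norm hx0).le (norm_smul_inv_norm hy0).le)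
      ?_⟩
  have hnormalized : ‖B (tmul ((‖x‖⁻¹ : 𝕜) • x) ((‖y‖⁻¹ : 𝕜) • y))‖ = ‖B‖ / (‖x‖ * ‖y‖) := by
    simp only [map_smul, _root_.smul_apply, norm_smul, hB, norm_inv,
      RCLike.norm_ofReal, abs_norm]
    ring
  rw [hnormalized]
  exact le_div_self (norm_nonneg B) (mul_pos (norm_pos_iff.2 hx0) (norm_pos_iff.2 hy0))
    (mul_le_one₀ hx (norm_nonneg y) hy)

end IsProjTensor

theorem stmt_3_general
    [MeasurableSpace X] [MeasurableSpace Y]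
    (tmul : X →L[𝕜] Y →L[𝕜] T) (hT : IsProjTensor tmul)
    (B : T →L[𝕜] 𝕜) (u : T) (hu : INApi tmul u) (hu1 : ‖u‖ = 1)
    (hB : ‖B u‖ = ‖B‖) :
    ∃ (x : X) (y : Y), ‖x‖ = 1 ∧ ‖y‖ = 1 ∧ ‖B (tmul x y)‖ = ‖B‖ := by
  obtain ⟨μ, hμ⟩ := hu
  have := hμ.isProbabilityMeasure hu1
  obtain ⟨-, hμball, hint, hu_eq, -⟩ := hμ
  have := hT.complete
  have hball : ∀ᵐ p ∂μ, p ∈ closedBall (0 : X) 1 ×ˢ closedBall (0 : Y) 1 := ae_iff.2 hμball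
  have hattain : ∀ᵐ p ∂μ, ‖B (tmul p.1 p.2)‖ = ‖B‖ := by
    refine ae_norm_eq_of_le_norm_integral (B.integrable_comp hint) ?_ ?_
    · filter_upwards [hball] with p ⟨hx, hy⟩
      exact hT.norm_apply_tmul_le B (mem_closedBall_zero_iff.1 hx) (mem_closedBall_zero_iff.1 hy)
    · rw [B.integral_comp_comm hint, ← hu_eq, hB]
  have hnonzero : ∃ᵐ p ∂μ, tmul p.1 p.2 ≠ 0 := by
    intro hzero
    have hu0 : u = 0 := hu_eq.trans (integral_eq_zero_of_ae (hzero.mono fun p hp => not_not.1 hp))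
    simp [hu0] at hu1
  obtain ⟨p, ⟨⟨hx, hy⟩, hp⟩, hp0⟩ := ((hball.and hattain).and_frequently hnonzero).exists
  exact hT.exists_norm_eq_one_of_norm_apply_tmul_eq B (mem_closedBall_zero_iff.1 hx)
    (mem_closedBall_zero_iff.1 hy) hp0 hp

/-- Corollary 2.6: a bilinear form attaining its norm (as a functional on the projective
tensor product) at an integral projective norm-attaining tensor is norm-attaining. -/
theorem stmt_3 [CompleteSpace X] [CompleteSpace Y]
    [MeasurableSpace X] [BorelSpace X] [MeasurableSpace Y] [BorelSpace Y]
    (tmul : X →L[𝕜] Y →L[𝕜] T) (hT : IsProjTensor tmul)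
    (B : T →L[𝕜] 𝕜) (u : T) (hu : INApi tmul u) (hu1 : ‖u‖ = 1)
    (hB : ‖B u‖ = ‖B‖) :
    ∃ (x : X) (y : Y), ‖x‖ = 1 ∧ ‖y‖ = 1 ∧ ‖B (tmul x y)‖ = ‖B‖ :=
  stmt_3_general tmul hT B u hu hu1 hB
end
end

section
/- Let X and Y be Banach spaces and let u be an extreme point of the closed unit ball of X⊗̂_πY. If u ∈ INA_π(X⊗̂_πY) is witnessed by a Radon measure on B_X×B_Y, then u is an elementary tensor, i.e. u = x₀⊗y₀ for some x₀ ∈ B_X and y₀ ∈ B_Y. -/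
open MeasureTheory Metric Set Filter TopologicalSpace

noncomputable section

variable {𝕜 : Type*} [RCLike 𝕜]
variable {X : Type*} [NormedAddCommGroup X] [NormedSpace 𝕜 X]
variable {Y : Type*} [NormedAddCommGroup Y] [NormedSpace 𝕜 Y]
variable {T : Type*} [NormedAddCommGroup T] [NormedSpace 𝕜 T]
variable [NormedSpace ℝ T] [IsScalarTower ℝ 𝕜 T]

/- In a nonzero space, extreme points of the unit ball have norm one, so `μ` is a probability
measure and `u` is the barycentre of the push-forward of `μ` under `(x, y) ↦ x ⊗ y`, which lives
in the unit ball. Splitting `μ` along any set `A` with `0 < μ A < 1` writes `u` as a proper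
convex combination of the two partial averages, which again lie in the unit ball; extremality
forces both to equal `u`. Hence `x ⊗ y = u` for `μ`-almost every `(x, y) ∈ B_X × B_Y`. -/

-- Own binders, so that the ambient real structure on `T` is not pulled in.
theorem IsProjTensor.norm_tmul_le_s8 {𝕜 X Y T : Type*} [RCLike 𝕜] [NormedAddCommGroup X]
    [NormedSpace 𝕜 X] [NormedAddCommGroup Y] [NormedSpace 𝕜 Y] [NormedAddCommGroup T]
    [NormedSpace 𝕜 T] {tmul : X →L[𝕜] Y →L[𝕜] T} (hT : IsProjTensor tmul) (x : X) (y : Y) :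
    ‖tmul x y‖ ≤ ‖x‖ * ‖y‖ := by
  rw [hT.norm_eq _ (Submodule.subset_span ⟨(x, y), rfl⟩)]
  refine csInf_le ⟨0, ?_⟩ ⟨1, ![x], ![y], by simp, by simp⟩
  rintro c ⟨m, xs, ys, -, rfl⟩
  exact Finset.sum_nonneg fun i _ => mul_nonneg (norm_nonneg _) (norm_nonneg _)

section Barycentre

variable {α E : Type*} {m0 : MeasurableSpace α} [NormedAddCommGroup E] [NormedSpace ℝ E]
  [CompleteSpace E] {μ : Measure α} {s : Set E} {f : α → E}

theorem Convex.ae_eq_const_of_average_mem_extremePoints [IsFiniteMeasure μ]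
    (hs : Convex ℝ s) (hsc : IsClosed s) (hfs : ∀ᵐ x ∂μ, f x ∈ s) (hfi : Integrable f μ)
    (hext : ⨍ x, f x ∂μ ∈ s.extremePoints ℝ) :
    f =ᵐ[μ] Function.const α (⨍ x, f x ∂μ) := by
  refine (ae_eq_const_or_exists_average_ne_compl hfi).resolve_right ?_
  rintro ⟨t, ht, ht₀, htc₀, hne⟩
  have hmem : ∀ {t'}, μ t' ≠ 0 → ⨍ x in t', f x ∂μ ∈ s := fun h =>
    hs.set_average_mem hsc h (measure_ne_top _ _) (ae_restrict_of_ae hfs) hfi.integrableOn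
  have hsplit := (mem_extremePoints.mp hext).2 _ (hmem ht₀) _ (hmem htc₀)
    (average_mem_openSegment_compl_self ht.nullMeasurableSet ht₀ htc₀ hfi)
  exact hne (hsplit.1.trans hsplit.2.symm)

end Barycentre

theorem stmt_8_general
    [MeasurableSpace X] [MeasurableSpace Y]
    (tmul : X →L[𝕜] Y →L[𝕜] T) (hT : IsProjTensor tmul)
    (u : T) (hu : u ∈ Set.extremePoints ℝ (closedBall (0 : T) 1))
    (μ : Measure (X × Y)) (hw : INApiWitness tmul u μ) :
    ∃ (x : X) (y : Y), ‖x‖ ≤ 1 ∧ ‖y‖ ≤ 1 ∧ u = tmul x y := by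
  obtain ⟨-, hnull, hint, hrepr, hmass⟩ := hw
  rcases subsingleton_or_nontrivial T with _ | _
  · exact ⟨0, 0, by simp, by simp, Subsingleton.elim _ _⟩
  have := hT.complete
  have hu₁ : ‖u‖ = 1 := mem_sphere_zero_iff_norm.mp (extremePoints_closedBall_subset_sphere hu)
  have : IsProbabilityMeasure μ := ⟨(ENNReal.toReal_eq_one_iff _).mp (hmass.trans hu₁)⟩
  have hball : ∀ᵐ p ∂μ, p ∈ closedBall (0 : X) 1 ×ˢ closedBall (0 : Y) 1 :=
    ae_iff.mpr hnull
  have htmul_ball : ∀ᵐ p ∂μ, tmul p.1 p.2 ∈ closedBall (0 : T) 1 := by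
    filter_upwards [hball] with p ⟨hx, hy⟩
    rw [mem_closedBall_zero_iff] at hx hy ⊢
    exact (hT.norm_tmul_le_s8 _ _).trans (mul_le_one₀ hx (norm_nonneg _) hy)
  have hconst : (fun p : X × Y => tmul p.1 p.2) =ᵐ[μ] Function.const _ u := by
    simpa only [average_eq_integral, ← hrepr] using
      (convex_closedBall (0 : T) 1).ae_eq_const_of_average_mem_extremePoints isClosed_closedBall
        htmul_ball hint (by rwa [average_eq_integral, ← hrepr])
  obtain ⟨p, ⟨hx, hy⟩, hpu⟩ := (hball.and hconst).exists
  exact ⟨p.1, p.2, mem_closedBall_zero_iff.mp hx, mem_closedBall_zero_iff.mp hy, hpu.symm⟩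

/-- Proposition 2.13: an extreme point of the unit ball which is integral projective
norm-attaining, witnessed by a Radon measure, is an elementary tensor. -/
theorem stmt_8 [CompleteSpace X] [CompleteSpace Y]
    [MeasurableSpace X] [BorelSpace X] [MeasurableSpace Y] [BorelSpace Y]
    (tmul : X →L[𝕜] Y →L[𝕜] T) (hT : IsProjTensor tmul)
    (u : T) (hu : u ∈ Set.extremePoints ℝ (closedBall (0 : T) 1))
    (μ : Measure (X × Y)) (hw : INApiWitness tmul u μ)
    (hInner : μ.InnerRegular) (hOuter : μ.OuterRegular) :
    ∃ (x : X) (y : Y), ‖x‖ ≤ 1 ∧ ‖y‖ ≤ 1 ∧ u = tmul x y :=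
  stmt_8_general tmul hT u hu μ hw
end
end

section
/- Let X and Y be separable Banach spaces and suppose that either (a) X or Y has the bounded approximation property, or (b) X* and Y* are separable and X or Y has the Dunford-Pettis property. Then for every finite positive Borel measure μ on (B_X, weak topology)×(B_Y, weak topology), the map φ: B_X×B_Y → X⊗̂_πY given by φ(x,y) = x⊗y is μ-Bochner integrable. -/
open MeasureTheory Metric Set Filter TopologicalSpace

noncomputable section

variable {𝕜 : Type*} [RCLike 𝕜]
variable {X : Type*} [NormedAddCommGroup X] [NormedSpace 𝕜 X]
variable {Y : Type*} [NormedAddCommGroup Y] [NormedSpace 𝕜 Y]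
variable {T : Type*} [NormedAddCommGroup T] [NormedSpace 𝕜 T]
variable [NormedSpace ℝ T] [IsScalarTower ℝ 𝕜 T]

/-- `X` has the bounded approximation property. -/
def HasBAP (𝕜 X : Type*) [RCLike 𝕜] [NormedAddCommGroup X] [NormedSpace 𝕜 X] : Prop :=
  ∃ lam : ℝ, ∀ K : Set X, IsCompact K → ∀ ε : ℝ, 0 < ε →
    ∃ S : X →L[𝕜] X, FiniteDimensional 𝕜 (LinearMap.range (S : X →ₗ[𝕜] X)) ∧
      ‖S‖ ≤ lam ∧ ∀ x ∈ K, ‖S x - x‖ ≤ ε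

/-- `X` has the approximation property. -/
def HasAP (𝕜 X : Type*) [RCLike 𝕜] [NormedAddCommGroup X] [NormedSpace 𝕜 X] : Prop :=
  ∀ K : Set X, IsCompact K → ∀ ε : ℝ, 0 < ε →
    ∃ S : X →L[𝕜] X, FiniteDimensional 𝕜 (LinearMap.range (S : X →ₗ[𝕜] X)) ∧
      ∀ x ∈ K, ‖S x - x‖ ≤ ε

/-- `X` has the Dunford-Pettis property. -/
def HasDPP (𝕜 X : Type*) [RCLike 𝕜] [NormedAddCommGroup X] [NormedSpace 𝕜 X] : Prop :=
  ∀ (x : ℕ → X) (f : ℕ → X →L[𝕜] 𝕜),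
    (∀ g : X →L[𝕜] 𝕜, Tendsto (fun n => g (x n)) atTop (nhds 0)) →
    (∀ Φ : (X →L[𝕜] 𝕜) →L[𝕜] 𝕜, Tendsto (fun n => Φ (f n)) atTop (nhds 0)) →
    Tendsto (fun n => f n (x n)) atTop (nhds 0)


/-- On a separable normed space over an `RCLike` field, the identity map from the weak
space to the norm space is Borel measurable, since every norm-open set is a countable
union of closed balls and closed balls are weakly closed (being convex and closed). -/
theorem aux_measurable_toWeakSpace_symm (𝕜 X : Type*) [RCLike 𝕜] [NormedAddCommGroup X]
    [NormedSpace 𝕜 X] [SeparableSpace X] [MeasurableSpace X] [BorelSpace X]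
    [MeasurableSpace (WeakSpace 𝕜 X)] [BorelSpace (WeakSpace 𝕜 X)] :
    Measurable fun p : WeakSpace 𝕜 X => (toWeakSpace 𝕜 X).symm p := by
  classical
  letI : NormedSpace ℝ X := NormedSpace.restrictScalars ℝ 𝕜 X
  have hball : ∀ (c : X) (r : ℝ),
      MeasurableSet ((fun p : WeakSpace 𝕜 X => (toWeakSpace 𝕜 X).symm p) ⁻¹' closedBall c r) := by
    intro c r
    have h2 : ((fun p : WeakSpace 𝕜 X => (toWeakSpace 𝕜 X).symm p) ⁻¹' closedBall c r)
        = toWeakSpace 𝕜 X '' closedBall c r := by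
      ext p
      simp only [Set.mem_preimage, Set.mem_image]
      constructor
      · intro hp; exact ⟨(toWeakSpace 𝕜 X).symm p, hp, by simp⟩
      · rintro ⟨x, hx, rfl⟩; simpa using hx
    rw [h2]
    have h1 := (convex_closedBall c r).toWeakSpace_closure 𝕜
    rw [Metric.isClosed_closedBall.closure_eq] at h1
    rw [h1]
    exact isClosed_closure.measurableSet
  apply measurable_of_isOpen
  intro U hU
  obtain ⟨D, hDc, hDd⟩ := TopologicalSpace.exists_countable_dense X
  haveI : Countable ↥D := hDc.to_subtype
  have hU_eq : U = ⋃ p : ↥D × ℚ,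
      if closedBall (p.1 : X) (p.2 : ℝ) ⊆ U then closedBall (p.1 : X) (p.2 : ℝ) else ∅ := by
    ext x
    simp only [Set.mem_iUnion]
    constructor
    · intro hx
      obtain ⟨ε, hε, hballU⟩ := Metric.isOpen_iff.mp hU x hx
      obtain ⟨d, hd⟩ := Metric.dense_iff.mp hDd x (ε / 4) (by linarith)
      obtain ⟨q, hq1, hq2⟩ := exists_rat_btwn (show (ε / 4 : ℝ) < ε / 2 by linarith)
      have hdx : dist d x < ε / 4 := Metric.mem_ball.mp hd.1
      refine ⟨(⟨d, hd.2⟩, q), ?_⟩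
      have hsub : closedBall d (q : ℝ) ⊆ U := by
        intro y hy
        apply hballU
        rw [Metric.mem_ball]
        calc dist y x ≤ dist y d + dist d x := dist_triangle _ _ _
          _ < ε / 2 + ε / 4 := by
              have := Metric.mem_closedBall.mp hy
              linarith
          _ < ε := by linarith
      rw [if_pos hsub]
      exact Metric.mem_closedBall.mpr (by rw [dist_comm]; linarith)
    · rintro ⟨p, hp⟩
      by_cases hsub : closedBall (p.1 : X) (p.2 : ℝ) ⊆ U
      · rw [if_pos hsub] at hp; exact hsub hp
      · rw [if_neg hsub] at hp; exact absurd hp (Set.notMem_empty x)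
  rw [hU_eq, Set.preimage_iUnion]
  refine MeasurableSet.iUnion fun p => ?_
  by_cases hsub : closedBall (p.1 : X) (p.2 : ℝ) ⊆ U
  · rw [if_pos hsub]; exact hball _ _
  · rw [if_neg hsub]; simp

/-- Proposition 3.1: sufficient conditions for Bochner integrability of `(x, y) ↦ x ⊗ y`
with respect to any finite positive Borel measure on `(B_X, w) × (B_Y, w)`. -/
theorem stmt_10 [CompleteSpace X] [CompleteSpace Y]
    [SeparableSpace X] [SeparableSpace Y]
    [MeasurableSpace (WeakSpace 𝕜 X)] [BorelSpace (WeakSpace 𝕜 X)]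
    [MeasurableSpace (WeakSpace 𝕜 Y)] [BorelSpace (WeakSpace 𝕜 Y)]
    (tmul : X →L[𝕜] Y →L[𝕜] T) (hT : IsProjTensor tmul)
    (h : (HasBAP 𝕜 X ∨ HasBAP 𝕜 Y) ∨
      (SeparableSpace (X →L[𝕜] 𝕜) ∧ SeparableSpace (Y →L[𝕜] 𝕜) ∧
        (HasDPP 𝕜 X ∨ HasDPP 𝕜 Y)))
    (μ : Measure (WeakSpace 𝕜 X × WeakSpace 𝕜 Y)) [IsFiniteMeasure μ]
    (hball : μ (((toWeakSpace 𝕜 X '' closedBall (0 : X) 1) ×ˢ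
      (toWeakSpace 𝕜 Y '' closedBall (0 : Y) 1))ᶜ) = 0) :
    Integrable
      (fun p : WeakSpace 𝕜 X × WeakSpace 𝕜 Y =>
        tmul ((toWeakSpace 𝕜 X).symm p.1) ((toWeakSpace 𝕜 Y).symm p.2)) μ := by
  
  letI : MeasurableSpace X := borel X
  haveI : BorelSpace X := ⟨rfl⟩
  letI : MeasurableSpace Y := borel Y
  haveI : BorelSpace Y := ⟨rfl⟩
  haveI : SecondCountableTopology X := UniformSpace.secondCountable_of_separable X
  haveI : SecondCountableTopology Y := UniformSpace.secondCountable_of_separable Y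
  have hmX := aux_measurable_toWeakSpace_symm 𝕜 X
  have hmY := aux_measurable_toWeakSpace_symm 𝕜 Y
  have hsm : StronglyMeasurable fun q : X × Y => tmul q.1 q.2 :=
    tmul.isBoundedBilinearMap.continuous.stronglyMeasurable
  have hmeas : Measurable fun p : WeakSpace 𝕜 X × WeakSpace 𝕜 Y =>
      (((toWeakSpace 𝕜 X).symm p.1 : X), ((toWeakSpace 𝕜 Y).symm p.2 : Y)) :=
    (hmX.comp measurable_fst).prodMk (hmY.comp measurable_snd)
  have haesm : AEStronglyMeasurable
      (fun p : WeakSpace 𝕜 X × WeakSpace 𝕜 Y =>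
        tmul ((toWeakSpace 𝕜 X).symm p.1) ((toWeakSpace 𝕜 Y).symm p.2)) μ :=
    (hsm.comp_measurable hmeas).aestronglyMeasurable
  refine (integrable_const (‖tmul‖ : ℝ)).mono' haesm ?_
  have h0 : ∀ᵐ p ∂μ, p ∈ (toWeakSpace 𝕜 X '' closedBall (0 : X) 1) ×ˢ
      (toWeakSpace 𝕜 Y '' closedBall (0 : Y) 1) := mem_ae_iff.mpr hball
  filter_upwards [h0] with p hp
  obtain ⟨x, hx, hxe⟩ := hp.1
  obtain ⟨y, hy, hye⟩ := hp.2
  have hxs : (toWeakSpace 𝕜 X).symm p.1 = x := by rw [← hxe]; simp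
  have hys : (toWeakSpace 𝕜 Y).symm p.2 = y := by rw [← hye]; simp
  rw [hxs, hys]
  have hx1 : ‖x‖ ≤ 1 := mem_closedBall_zero_iff.mp hx
  have hy1 : ‖y‖ ≤ 1 := mem_closedBall_zero_iff.mp hy
  calc ‖tmul x y‖ ≤ ‖tmul‖ * ‖x‖ * ‖y‖ := tmul.le_opNorm₂ x y
    _ ≤ ‖tmul‖ * 1 * 1 := by
        have h1 : (0:ℝ) ≤ ‖tmul‖ := tmul.opNorm_nonneg
        exact mul_le_mul (mul_le_mul_of_nonneg_left hx1 h1) hy1 (norm_nonneg y)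
          (by rw [mul_one]; exact h1)
    _ = ‖tmul‖ := by ring
end
end

section
/- Let (Ω,Σ,μ) be a measure space, let n ∈ ℕ, and set p = 2n/(2n−1). If E is a finite-dimensional subspace of L_{2n}(μ), then there exists a finite-dimensional subspace F of L_p(μ) = L_{2n}(μ)* such that ρ(E ∩ S_{L_{2n}(μ)}) ⊆ F, where ρ: S_{L_{2n}(μ)} → S_{L_p(μ)} is the spherical image map; explicitly, ρ(f) = f^{n−1}·(conj f)^n (pointwise product) for every f ∈ S_{L_{2n}(μ)}, and if E = span{v₁,…,v_r} one may take F to be the linear span of the finitely many pointwise products v₁^{k₁}···v_r^{k_r}·(conj v₁)^{j₁}···(conj v_r)^{j_r} with k₁+…+k_r = n−1 and j₁+…+j_r = n. -/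
open MeasureTheory Metric Set Filter TopologicalSpace
open scoped ENNReal

noncomputable section

variable {𝕜 : Type*} [RCLike 𝕜]
variable {X : Type*} [NormedAddCommGroup X] [NormedSpace 𝕜 X]
variable {Y : Type*} [NormedAddCommGroup Y] [NormedSpace 𝕜 Y]
variable {T : Type*} [NormedAddCommGroup T] [NormedSpace 𝕜 T]
variable [NormedSpace ℝ T] [IsScalarTower ℝ 𝕜 T]

/-! Write `f ∈ E` as `∑ cᵢ vᵢ` over a finite spanning family of `E`; then `f ^ (n - 1) * conj f ^ n`
is a linear combination of the finitely many monomials `∏ v_{a t} * ∏ conj v_{b t}` of degree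
`(n - 1, n)`, each a product of `2n - 1` functions in `L_{2n}` and hence in `L_p` by Hölder's
inequality. Pointwise `|ρ f| = |f| ^ (2n - 1)` and `f · ρ f = |f| ^ (2n)`, so
`‖ρ f‖_p = ‖f‖_{2n} ^ (2n - 1)` and `∫ f · ρ f = ‖f‖_{2n} ^ (2n)`. -/

open Finset ComplexConjugate

theorem sum_mul_pow_mul_sum_mul_pow {R ι : Type*} [CommSemiring R] [Fintype ι]
    (c d V W : ι → R) (k l : ℕ) :
    (∑ i, c i * V i) ^ k * (∑ i, d i * W i) ^ l =
      ∑ ab : (Fin k → ι) × (Fin l → ι),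
        ((∏ t, c (ab.1 t)) * ∏ t, d (ab.2 t)) * ((∏ t, V (ab.1 t)) * ∏ t, W (ab.2 t)) := by
  simp only [Fintype.sum_pow, prod_mul_distrib, sum_mul_sum, Fintype.sum_prod_type]
  exact sum_congr rfl fun a _ => sum_congr rfl fun b _ => by ring

theorem RCLike.norm_pow_mul_conj_pow (z : 𝕜) (n : ℕ) :
    ‖z ^ (n - 1) * conj z ^ n‖ = ‖z‖ ^ (2 * n - 1) := by
  rw [norm_mul, norm_pow, norm_pow, RCLike.norm_conj, ← pow_add]
  congr 1
  omega

theorem RCLike.mul_pow_mul_conj_pow (z : 𝕜) {n : ℕ} (hn : 1 ≤ n) :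
    z * (z ^ (n - 1) * conj z ^ n) = ((‖z‖ ^ (2 * n) : ℝ) : 𝕜) := by
  obtain ⟨m, rfl⟩ := Nat.exists_eq_add_of_le' hn
  rw [Nat.add_sub_cancel, ← mul_assoc, ← pow_succ', ← mul_pow, RCLike.mul_conj, pow_mul]
  push_cast
  ring

namespace MeasureTheory

variable {Ω : Type*} [MeasurableSpace Ω] {μ : Measure Ω}

def conjMonomial {ι : Type*} {k l : ℕ} (v : ι → Ω → 𝕜) (ab : (Fin k → ι) × (Fin l → ι)) :
    Ω → 𝕜 :=
  fun ω => (∏ t, v (ab.1 t) ω) * ∏ t, conj (v (ab.2 t) ω)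

theorem memLp_conjMonomial {ι : Type*} {k l : ℕ} {p q : ℝ≥0∞} {v : ι → Ω → 𝕜}
    (hv : ∀ i, MemLp (v i) q μ) (hp : p⁻¹ = (k + l) * q⁻¹) (ab : (Fin k → ι) × (Fin l → ι)) :
    MemLp (conjMonomial v ab) p μ := by
  have := MemLp.prod' (s := univ) (p := fun _ => q) (μ := μ)
    (f := Sum.elim (fun t => v (ab.1 t)) (fun t => star (v (ab.2 t))))
    (by rintro (t | t) -; exacts [hv _, (hv _).star])
  unfold conjMonomial
  simpa [Fintype.prod_sum_type, ← hp] using this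

theorem eLpNorm_eq_pow_of_norm_ae_eq_pow {F G : Type*} [NormedAddCommGroup F]
    [NormedAddCommGroup G] {f : Ω → F} {g : Ω → G} {k : ℕ} (hk : k ≠ 0)
    (h : ∀ᵐ ω ∂μ, ‖g ω‖ = ‖f ω‖ ^ k) (p : ℝ≥0∞) :
    eLpNorm g p μ = eLpNorm f (p * k) μ ^ k := by
  have h' : ∀ᵐ ω ∂μ, ‖g ω‖ = ‖‖f ω‖ ^ (k : ℝ)‖ :=
    h.mono fun ω hω => by rw [hω, Real.rpow_natCast, norm_pow, norm_norm]
  rw [eLpNorm_congr_norm_ae h', eLpNorm_norm_rpow f (by positivity), ENNReal.ofReal_natCast,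
    ENNReal.rpow_natCast]

namespace Lp

variable {E : Type*} [NormedAddCommGroup E] [NormedSpace 𝕜 E] {p : ℝ≥0∞}

theorem coeFn_sum_smul {ι : Type*} [Fintype ι] (c : ι → 𝕜) (v : ι → Lp E p μ) :
    ⇑(∑ i, c i • v i) =ᵐ[μ] fun ω => ∑ i, c i • v i ω := by
  have hsmul : ∀ᵐ ω ∂μ, ∀ i, (c i • v i) ω = c i • v i ω :=
    ae_all_iff.2 fun i => coeFn_smul (c i) (v i)
  filter_upwards [coeFn_finsetSum univ fun i => c i • v i, hsmul] with ω hsum hω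
  rw [hsum, Finset.sum_apply]
  exact sum_congr rfl fun i _ => hω i

theorem mem_span_range_toLp_of_ae_eq_sum {ι : Type*} [Fintype ι] {M : ι → Ω → E}
    (hM : ∀ j, MemLp (M j) p μ) {g : Lp E p μ} (c : ι → 𝕜)
    (hg : g =ᵐ[μ] fun ω => ∑ j, c j • M j ω) :
    g ∈ Submodule.span 𝕜 (range fun j => (hM j).toLp (M j)) := by
  have hMω : ∀ᵐ ω ∂μ, ∀ j, (hM j).toLp (M j) ω = M j ω :=
    ae_all_iff.2 fun j => (hM j).coeFn_toLp
  have hg_sum : g = ∑ j, c j • (hM j).toLp (M j) := by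
    refine ext (hg.trans ?_)
    filter_upwards [coeFn_sum_smul c fun j => (hM j).toLp (M j), hMω] with ω hsum hω
    simp only [hsum, hω]
  rw [hg_sum]
  exact Submodule.sum_mem _ fun j _ => Submodule.smul_mem _ _ (Submodule.subset_span ⟨j, rfl⟩)

theorem integral_norm_rpow_eq {q : ℝ≥0∞} (hq0 : q ≠ 0) (hqt : q ≠ ∞) (f : Lp E q μ) :
    ∫ ω, ‖f ω‖ ^ q.toReal ∂μ = ‖f‖ ^ q.toReal := by
  have hpos : 0 < q.toReal := ENNReal.toReal_pos hq0 hqt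
  rw [Lp.norm_def, (Lp.memLp f).eLpNorm_eq_integral_rpow_norm hq0 hqt,
    ENNReal.toReal_ofReal (by positivity), ← Real.rpow_mul (by positivity),
    inv_mul_cancel₀ hpos.ne', Real.rpow_one]

theorem norm_eq_norm_pow_of_ae_eq_pow_mul_conj_pow {n : ℕ} (hn : 1 ≤ n) {p q : ℝ≥0∞}
    (hpq : p * (2 * n - 1 : ℕ) = q) (f : Lp 𝕜 q μ) (g : Lp 𝕜 p μ)
    (hg : g =ᵐ[μ] fun ω => f ω ^ (n - 1) * conj (f ω) ^ n) :
    ‖g‖ = ‖f‖ ^ (2 * n - 1) := by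
  have hgf : ∀ᵐ ω ∂μ, ‖g ω‖ = ‖f ω‖ ^ (2 * n - 1) :=
    hg.mono fun ω hω => by rw [hω, RCLike.norm_pow_mul_conj_pow]
  rw [Lp.norm_def, eLpNorm_eq_pow_of_norm_ae_eq_pow (by omega) hgf p, hpq, ENNReal.toReal_pow,
    ← Lp.norm_def]

theorem integral_mul_eq_norm_pow_of_ae_eq_pow_mul_conj_pow {n : ℕ} (hn : 1 ≤ n) {q : ℝ≥0∞}
    (hq : q = (2 * n : ℕ)) (f : Lp 𝕜 q μ) {g : Ω → 𝕜}
    (hg : g =ᵐ[μ] fun ω => f ω ^ (n - 1) * conj (f ω) ^ n) :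
    ∫ ω, f ω * g ω ∂μ = ((‖f‖ ^ (2 * n) : ℝ) : 𝕜) := by
  have hfg : (fun ω => f ω * g ω) =ᵐ[μ] fun ω => ((‖f ω‖ ^ (2 * n) : ℝ) : 𝕜) :=
    hg.mono fun ω hω => by simp only [hω, RCLike.mul_pow_mul_conj_pow _ hn]
  subst hq
  have hnorm := integral_norm_rpow_eq (by exact_mod_cast (by omega : 2 * n ≠ 0))
    (ENNReal.natCast_ne_top _) f
  simp only [ENNReal.toReal_natCast, Real.rpow_natCast] at hnorm
  rw [integral_congr_ae hfg, integral_ofReal, hnorm]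

end Lp

theorem exists_finiteDimensional_forall_pow_mul_conj_pow_mem {p q : ℝ≥0∞}
    (E : Submodule 𝕜 (Lp 𝕜 q μ)) [FiniteDimensional 𝕜 E] (k l : ℕ)
    (hp : p⁻¹ = (k + l) * q⁻¹) :
    ∃ F : Submodule 𝕜 (Lp 𝕜 p μ), FiniteDimensional 𝕜 F ∧
      ∀ f ∈ E, ∀ g : Lp 𝕜 p μ, g =ᵐ[μ] (fun ω => f ω ^ k * conj (f ω) ^ l) → g ∈ F := by
  obtain ⟨s, rfl⟩ := (Submodule.fg_iff_finiteDimensional E).2 ‹_›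
  have hM := memLp_conjMonomial (fun i : s => Lp.memLp (i : Lp 𝕜 q μ)) hp
  refine ⟨_, FiniteDimensional.span_of_finite 𝕜 (finite_range fun ab => (hM ab).toLp _), ?_⟩
  intro f hf g hg
  obtain ⟨c, rfl⟩ : ∃ c : s → 𝕜, ∑ i, c i • (i : Lp 𝕜 q μ) = f :=
    Submodule.mem_span_range_iff_exists_fun 𝕜 |>.1 (by simpa using hf)
  refine Lp.mem_span_range_toLp_of_ae_eq_sum hM
    (fun ab => (∏ t, c (ab.1 t)) * ∏ t, conj (c (ab.2 t))) ?_
  filter_upwards [hg, Lp.coeFn_sum_smul c fun i : s => (i : Lp 𝕜 q μ)] with ω hgω hfω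
  simp only [hgω, hfω, smul_eq_mul, map_sum, map_mul]
  exact sum_mul_pow_mul_sum_mul_pow _ _ _ _ k l

end MeasureTheory

open MeasureTheory

theorem stmt_16_general {Ω : Type*} [MeasurableSpace Ω] (μ : Measure Ω)
    (n : ℕ) (hn : 1 ≤ n) (p q : ℝ≥0∞)
    (hq : q = 2 * n) (hp : p = 2 * n / (2 * n - 1))
    (E : Submodule 𝕜 (Lp 𝕜 q μ)) (hE : FiniteDimensional 𝕜 E) :
    ∃ F : Submodule 𝕜 (Lp 𝕜 p μ), FiniteDimensional 𝕜 F ∧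
      ∀ f : Lp 𝕜 q μ, f ∈ E → ‖f‖ = 1 →
        ∀ g : Lp 𝕜 p μ,
          (g : Ω → 𝕜) =ᵐ[μ]
            (fun ω => (f ω) ^ (n - 1) * (starRingEnd 𝕜 (f ω)) ^ n) →
          ‖g‖ = 1 ∧ (∫ ω, (f ω) * (g ω) ∂μ) = 1 ∧ g ∈ F := by
  replace hq : q = (2 * n : ℕ) := by rw [hq]; push_cast; rfl
  replace hp : p = (2 * n : ℕ) / (2 * n - 1 : ℕ) := by
    rw [hp, ENNReal.natCast_sub]; push_cast; rfl
  have h2n : ((2 * n - 1 : ℕ) : ℝ≥0∞) ≠ 0 := by exact_mod_cast (by omega : 2 * n - 1 ≠ 0)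
  have hpinv : p⁻¹ = ((n - 1 : ℕ) + n) * q⁻¹ := by
    rw [hp, hq, ENNReal.inv_div (.inl (ENNReal.natCast_ne_top _)) (.inl h2n), div_eq_mul_inv]
    norm_cast
    congr 2
    omega
  have hpq : p * (2 * n - 1 : ℕ) = q := by
    rw [hp, hq, ENNReal.div_mul_cancel h2n (ENNReal.natCast_ne_top _)]
  obtain ⟨F, hF, hEF⟩ := exists_finiteDimensional_forall_pow_mul_conj_pow_mem E (n - 1) n hpinv
  refine ⟨F, hF, fun f hfE hf1 g hg => ⟨?_, ?_, hEF f hfE g hg⟩⟩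
  · rw [Lp.norm_eq_norm_pow_of_ae_eq_pow_mul_conj_pow hn hpq f g hg, hf1, one_pow]
  · rw [Lp.integral_mul_eq_norm_pow_of_ae_eq_pow_mul_conj_pow hn hq f hg, hf1, one_pow,
      RCLike.ofReal_one]

/-- Lemma 4.5: the spherical image map of `L_{2n}(μ)` maps finite-dimensional subspaces
into a finite-dimensional subspace of `L_p(μ)`, `p = 2n/(2n-1)`, explicitly given by
`ρ(f) = f^(n-1) · (conj f)^n`. -/
theorem stmt_16 {Ω : Type*} [MeasurableSpace Ω] (μ : Measure Ω)
    (n : ℕ) (hn : 1 ≤ n) (p q : ℝ≥0∞)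
    (hq : q = 2 * n) (hp : p = 2 * n / (2 * n - 1))
    [Fact (1 ≤ p)] [Fact (1 ≤ q)]
    (E : Submodule 𝕜 (Lp 𝕜 q μ)) (hE : FiniteDimensional 𝕜 E) :
    ∃ F : Submodule 𝕜 (Lp 𝕜 p μ), FiniteDimensional 𝕜 F ∧
      ∀ f : Lp 𝕜 q μ, f ∈ E → ‖f‖ = 1 →
        ∀ g : Lp 𝕜 p μ,
          (g : Ω → 𝕜) =ᵐ[μ]
            (fun ω => (f ω) ^ (n - 1) * (starRingEnd 𝕜 (f ω)) ^ n) →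
          ‖g‖ = 1 ∧ (∫ ω, (f ω) * (g ω) ∂μ) = 1 ∧ g ∈ F :=
  stmt_16_general μ n hn p q hq hp E hE
end
end

section
/- Let Y be a Banach space containing a strictly convex subspace Z with dim Z > 1. Then there exists a Borel measurable (indeed continuous) map F: [0,1] → S_Y such that for each y* ∈ S_{Y*} one has |y*(F(t))| < 1 for Lebesgue-almost all t ∈ [0,1]; concretely, for any two linearly independent z₁, z₂ ∈ S_Z, the map F(t) = ((1−t)z₁ + t z₂)/‖(1−t)z₁ + t z₂‖ has the property that for each y* ∈ S_{Y*} there is at most one t ∈ [0,1] with |y*(F(t))| = 1. -/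
open MeasureTheory Metric Set Filter TopologicalSpace

noncomputable section

variable {𝕜 : Type*} [RCLike 𝕜]
variable {X : Type*} [NormedAddCommGroup X] [NormedSpace 𝕜 X]
variable {Y : Type*} [NormedAddCommGroup Y] [NormedSpace 𝕜 Y]
variable {T : Type*} [NormedAddCommGroup T] [NormedSpace 𝕜 T]
variable [NormedSpace ℝ T] [IsScalarTower ℝ 𝕜 T]

/-- Lemma 4.9: a Banach space containing a strictly convex subspace of dimension `> 1`
admits a Borel (indeed continuous) curve in its unit sphere which is almost never normed
by any fixed norm-one functional. -/
theorem stmt_19 [CompleteSpace Y] [MeasurableSpace Y] [BorelSpace Y]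
    (Z : Submodule 𝕜 Y) (hdim : 1 < Module.rank 𝕜 Z)
    (hZsc : ∀ z₁ z₂ : Y, z₁ ∈ Z → z₂ ∈ Z → ‖z₁‖ = 1 → ‖z₂‖ = 1 → z₁ ≠ z₂ →
      ‖z₁ + z₂‖ < 2) :
    (∃ F : ℝ → Y, Measurable F ∧ (∀ t ∈ Icc (0 : ℝ) 1, ‖F t‖ = 1) ∧
      ∀ g : Y →L[𝕜] 𝕜, ‖g‖ = 1 →
        ∀ᵐ t ∂(volume.restrict (Icc (0 : ℝ) 1)), ‖g (F t)‖ < 1) ∧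
    (∀ z₁ z₂ : Y, z₁ ∈ Z → z₂ ∈ Z → ‖z₁‖ = 1 → ‖z₂‖ = 1 →
      LinearIndependent 𝕜 ![z₁, z₂] →
      ∀ F : ℝ → Y,
        (∀ t : ℝ,
          F t = ((‖((1 - t : ℝ) : 𝕜) • z₁ + ((t : ℝ) : 𝕜) • z₂‖⁻¹ : ℝ) : 𝕜) •
            (((1 - t : ℝ) : 𝕜) • z₁ + ((t : ℝ) : 𝕜) • z₂)) →
        Continuous F ∧ (∀ t ∈ Icc (0 : ℝ) 1, ‖F t‖ = 1) ∧
        (∀ g : Y →L[𝕜] 𝕜, ‖g‖ = 1 →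
          Set.Subsingleton {t : ℝ | t ∈ Icc (0 : ℝ) 1 ∧ ‖g (F t)‖ = 1} ∧
          ∀ᵐ t ∂(volume.restrict (Icc (0 : ℝ) 1)), ‖g (F t)‖ < 1)) := by
  have main : ∀ z₁ z₂ : Y, z₁ ∈ Z → z₂ ∈ Z → ‖z₁‖ = 1 → ‖z₂‖ = 1 →
      LinearIndependent 𝕜 ![z₁, z₂] →
      ∀ F : ℝ → Y,
        (∀ t : ℝ,
          F t = ((‖((1 - t : ℝ) : 𝕜) • z₁ + ((t : ℝ) : 𝕜) • z₂‖⁻¹ : ℝ) : 𝕜) •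
            (((1 - t : ℝ) : 𝕜) • z₁ + ((t : ℝ) : 𝕜) • z₂)) →
        Continuous F ∧ (∀ t ∈ Icc (0 : ℝ) 1, ‖F t‖ = 1) ∧
        (∀ g : Y →L[𝕜] 𝕜, ‖g‖ = 1 →
          Set.Subsingleton {t : ℝ | t ∈ Icc (0 : ℝ) 1 ∧ ‖g (F t)‖ = 1} ∧
          ∀ᵐ t ∂(volume.restrict (Icc (0 : ℝ) 1)), ‖g (F t)‖ < 1) := by
    intro z₁ z₂ hz₁ hz₂ hn₁ hn₂ hli F hF
    set v : ℝ → Y := fun t => ((1 - t : ℝ) : 𝕜) • z₁ + ((t : ℝ) : 𝕜) • z₂ with hv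
    have hvne : ∀ t : ℝ, v t ≠ 0 := by
      intro t h
      obtain ⟨h1, h2⟩ := LinearIndependent.pair_iff.mp hli _ _ h
      have ht : t = 0 := by exact_mod_cast RCLike.ofReal_eq_zero.mp h2
      rw [ht] at h1
      simp at h1
    have hFnorm : ∀ t : ℝ, ‖F t‖ = 1 := by
      intro t
      rw [hF t, norm_smul]
      simp only [RCLike.norm_ofReal, abs_inv, abs_norm]
      exact inv_mul_cancel₀ (norm_ne_zero_iff.mpr (hvne t))
    have hvcont : Continuous v := by
      apply Continuous.add
      · exact (RCLike.continuous_ofReal.comp (continuous_const.sub continuous_id)).smul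
          continuous_const
      · exact RCLike.continuous_ofReal.smul continuous_const
    have hFcont : Continuous F := by
      have hFe : F = fun t => ((‖v t‖⁻¹ : ℝ) : 𝕜) • v t := funext hF
      rw [hFe]
      exact (RCLike.continuous_ofReal.comp
        (hvcont.norm.inv₀ fun t => norm_ne_zero_iff.mpr (hvne t))).smul hvcont
    have hFmem : ∀ t : ℝ, F t ∈ Z := fun t => by
      rw [hF t]
      exact Z.smul_mem _ (Z.add_mem (Z.smul_mem _ hz₁) (Z.smul_mem _ hz₂))
    refine ⟨hFcont, fun t _ => hFnorm t, fun g hg => ?_⟩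
    have hsub : Set.Subsingleton {t : ℝ | t ∈ Icc (0 : ℝ) 1 ∧ ‖g (F t)‖ = 1} := by
      rintro t ⟨_, hgt⟩ s ⟨_, hgs⟩
      set a := starRingEnd 𝕜 (g (F t)) with ha
      set b := starRingEnd 𝕜 (g (F s)) with hb
      have hna : ‖a‖ = 1 := by rw [ha, RCLike.norm_conj, hgt]
      have hnb : ‖b‖ = 1 := by rw [hb, RCLike.norm_conj, hgs]
      have hga : g (a • F t) = 1 := by
        rw [_root_.map_smul, smul_eq_mul, ha, RCLike.conj_mul, hgt]
        norm_num
      have hgb : g (b • F s) = 1 := by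
        rw [_root_.map_smul, smul_eq_mul, hb, RCLike.conj_mul, hgs]
        norm_num
      have hnu : ‖a • F t‖ = 1 := by rw [norm_smul, hna, hFnorm, one_mul]
      have hnv : ‖b • F s‖ = 1 := by rw [norm_smul, hnb, hFnorm, one_mul]
      have huv : a • F t = b • F s := by
        by_contra hne
        have hlt := hZsc _ _ (Z.smul_mem a (hFmem t)) (Z.smul_mem b (hFmem s)) hnu hnv hne
        have hsum : g (a • F t + b • F s) = 2 := by rw [map_add, hga, hgb]; norm_num
        have h2 := g.le_opNorm (a • F t + b • F s)
        rw [hsum, hg, one_mul] at h2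
        simp only [RCLike.norm_ofNat] at h2
        linarith
      rw [hF t, hF s] at huv
      set A := a * ((‖v t‖⁻¹ : ℝ) : 𝕜) with hA
      set B := b * ((‖v s‖⁻¹ : ℝ) : 𝕜) with hB
      have hA0 : A ≠ 0 := by
        refine mul_ne_zero (fun h => ?_) ?_
        · rw [h] at hna; simp at hna
        · exact RCLike.ofReal_ne_zero.mpr (inv_ne_zero (norm_ne_zero_iff.mpr (hvne t)))
      have heq : A • v t = B • v s := by
        rw [hA, hB, mul_smul, mul_smul]
        exact huv
      have key : (A * ((1 - t : ℝ) : 𝕜) - B * ((1 - s : ℝ) : 𝕜)) • z₁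
          + (A * ((t : ℝ) : 𝕜) - B * ((s : ℝ) : 𝕜)) • z₂ = 0 := by
        have h0 : A • v t - B • v s = 0 := by rw [heq, sub_self]
        rw [hv] at h0
        simp only at h0
        rw [smul_add, smul_add, smul_smul, smul_smul, smul_smul, smul_smul] at h0
        rw [sub_smul, sub_smul]
        linear_combination (norm := module) h0
      obtain ⟨e1, e2⟩ := LinearIndependent.pair_iff.mp hli _ _ key
      have h1 : A * ((1 - t : ℝ) : 𝕜) = B * ((1 - s : ℝ) : 𝕜) := sub_eq_zero.mp e1
      have h2 : A * ((t : ℝ) : 𝕜) = B * ((s : ℝ) : 𝕜) := sub_eq_zero.mp e2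
      have hAB : A = B := by
        push_cast at h1
        linear_combination h1 + h2
      rw [hAB] at h2
      have := mul_left_cancel₀ (hAB ▸ hA0) h2
      exact_mod_cast this
    refine ⟨hsub, ?_⟩
    have hE : volume {t : ℝ | t ∈ Icc (0 : ℝ) 1 ∧ ‖g (F t)‖ = 1} = 0 :=
      Set.Countable.measure_zero hsub.countable _
    rw [ae_restrict_iff' measurableSet_Icc]
    filter_upwards [measure_eq_zero_iff_ae_notMem.mp hE] with t htE htI
    have hle : ‖g (F t)‖ ≤ 1 := by
      calc ‖g (F t)‖ ≤ ‖g‖ * ‖F t‖ := g.le_opNorm _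
        _ = 1 := by rw [hg, hFnorm, one_mul]
    rcases lt_or_eq_of_le hle with h | h
    · exact h
    · exact absurd ⟨htI, h⟩ htE
  refine ⟨?_, main⟩
  have h1 : ¬ Module.rank 𝕜 Z ≤ 1 := not_le.mpr hdim
  rw [rank_le_one_iff] at h1
  push_neg at h1
  obtain ⟨w0, hw0⟩ := h1 0
  have hw0' : w0 ≠ 0 := by intro h; exact hw0 0 (by simp [h])
  obtain ⟨w1, hw1⟩ := h1 w0
  have hw1' : w1 ≠ 0 := by intro h; exact hw1 0 (by simp [h])
  set y₁ : Y := (w1 : Y) with hy₁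
  set y₂ : Y := (w0 : Y) with hy₂
  have hy₁0 : y₁ ≠ 0 := by simpa [hy₁, Submodule.coe_eq_zero] using hw1'
  have hy₂0 : y₂ ≠ 0 := by simpa [hy₂, Submodule.coe_eq_zero] using hw0'
  have hnm : ∀ c : 𝕜, c • y₂ ≠ y₁ := by
    intro c h
    apply hw1 c
    apply Subtype.coe_injective
    simpa [hy₁, hy₂] using h
  have hbase : LinearIndependent 𝕜 ![y₁, y₂] := by
    rw [linearIndependent_fin2]
    refine ⟨by simpa using hy₂0, fun c => by simpa using hnm c⟩
  set z₁ : Y := ((‖y₁‖⁻¹ : ℝ) : 𝕜) • y₁ with hz₁d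
  set z₂ : Y := ((‖y₂‖⁻¹ : ℝ) : 𝕜) • y₂ with hz₂d
  have hz₁m : z₁ ∈ Z := Z.smul_mem _ w1.2
  have hz₂m : z₂ ∈ Z := Z.smul_mem _ w0.2
  have hz₁n : ‖z₁‖ = 1 := by
    rw [hz₁d, norm_smul]
    simp only [RCLike.norm_ofReal, abs_inv, abs_norm]
    exact inv_mul_cancel₀ (norm_ne_zero_iff.mpr hy₁0)
  have hz₂n : ‖z₂‖ = 1 := by
    rw [hz₂d, norm_smul]
    simp only [RCLike.norm_ofReal, abs_inv, abs_norm]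
    exact inv_mul_cancel₀ (norm_ne_zero_iff.mpr hy₂0)
  have hliz : LinearIndependent 𝕜 ![z₁, z₂] := by
    rw [LinearIndependent.pair_iff]
    intro p q hpq
    rw [hz₁d, hz₂d, smul_smul, smul_smul] at hpq
    obtain ⟨e1, e2⟩ := LinearIndependent.pair_iff.mp hbase _ _ hpq
    have hc₁ : ((‖y₁‖⁻¹ : ℝ) : 𝕜) ≠ 0 :=
      RCLike.ofReal_ne_zero.mpr (inv_ne_zero (norm_ne_zero_iff.mpr hy₁0))
    have hc₂ : ((‖y₂‖⁻¹ : ℝ) : 𝕜) ≠ 0 :=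
      RCLike.ofReal_ne_zero.mpr (inv_ne_zero (norm_ne_zero_iff.mpr hy₂0))
    exact ⟨(mul_eq_zero.mp e1).resolve_right hc₁, (mul_eq_zero.mp e2).resolve_right hc₂⟩
  obtain ⟨hFcont, hFn, hFg⟩ := main z₁ z₂ hz₁m hz₂m hz₁n hz₂n hliz
    (fun t => ((‖((1 - t : ℝ) : 𝕜) • z₁ + ((t : ℝ) : 𝕜) • z₂‖⁻¹ : ℝ) : 𝕜) •
      (((1 - t : ℝ) : 𝕜) • z₁ + ((t : ℝ) : 𝕜) • z₂)) (fun t => rfl)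
  exact ⟨_, hFcont.measurable, hFn, fun g hg => (hFg g hg).2⟩
end
end
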